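/- arXiv:2007.00085 — 4 statements merged into one kernel-verified Lean document; each statement's English description precedes it below -/
import Mathlib

section
/- If a belief b is winning for an almost-sure reach-avoid specification in a POMDP, then any belief b' with the same support as b is also winning. -/
open scoped ENNReal Classical

/-- A POMDP: transition function `P` and observation function `obs`. -/
structure POMDP (S Act Ω : Type) where
  P : S → Act → PMF S
  obs : S → Ω

namespace POMDP

variable {S Act Ω : Type}

/-- A history-dependent observation-based policy: maps the observation-action
history and the current observation to a distribution over actions. -/
def Policy (Act Ω : Type) := List (Ω × Act) → Ω → PMF Act

/-- Probability to reach `T` within `n` steps, starting in state `s` with history `h`. -/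
noncomputable def reachN (M : POMDP S Act Ω) (σ : Policy Act Ω) (T : Set S) :
    ℕ → List (Ω × Act) → S → ℝ≥0∞
  | 0, _, s => if s ∈ T then 1 else 0
  | n + 1, h, s =>
    if s ∈ T then 1
    else ∑' α : Act, σ h (M.obs s) α *
      ∑' s' : S, M.P s α s' * M.reachN σ T n (h ++ [(M.obs s, α)]) s'

/-- Probability to eventually reach `T` from initial belief `b` under policy `σ`. -/
noncomputable def prReach (M : POMDP S Act Ω) (σ : Policy Act Ω) (T : Set S)
    (b : PMF S) : ℝ≥0∞ :=
  ⨆ n, ∑' s : S, b s * M.reachN σ T n [] s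

/-- A policy is winning from belief `b`: AVOID reached with probability 0,
REACH reached with probability 1. -/
def WinningPolicyFrom (M : POMDP S Act Ω) (REACH AVOID : Set S)
    (σ : Policy Act Ω) (b : PMF S) : Prop :=
  M.prReach σ AVOID b = 0 ∧ M.prReach σ REACH b = 1

/-- A belief is winning if some winning policy exists from it. -/
def WinningBelief (M : POMDP S Act Ω) (REACH AVOID : Set S) (b : PMF S) : Prop :=
  ∃ σ, M.WinningPolicyFrom REACH AVOID σ b

/-- A set of states is absorbing. -/
def Absorbing (M : POMDP S Act Ω) (T : Set S) : Prop :=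
  ∀ s ∈ T, ∀ α, M.P s α = PMF.pure s

/-- A belief support: a nonempty set of states sharing a common observation. -/
def IsBeliefSupport (M : POMDP S Act Ω) (b : Set S) : Prop :=
  b.Nonempty ∧ ∀ s ∈ b, ∀ s' ∈ b, M.obs s = M.obs s'

/-- A policy is winning from a belief support `b` if it is winning from every
belief whose support is `b`. -/
def WinningFromSupport (M : POMDP S Act Ω) (REACH AVOID : Set S)
    (σ : Policy Act Ω) (b : Set S) : Prop :=
  ∀ β : PMF S, β.support = b → M.WinningPolicyFrom REACH AVOID σ β

/-- A belief support is winning if some policy is winning from it. -/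
def WinningSupport (M : POMDP S Act Ω) (REACH AVOID : Set S) (b : Set S) : Prop :=
  ∃ σ, M.WinningFromSupport REACH AVOID σ b

end POMDP

/-!
The probability of reaching a set from belief `b` is the `b`-average of the per-state reach
probabilities (monotone convergence lets the limit over the horizon pass through the sum).
Since these lie in `[0, 1]`, the average is `0` (resp. `1`) iff they vanish (resp. equal `1`)
on the support of `b`; so whether a fixed policy wins from `b` depends only on `b.support`.
-/

lemma ENNReal.tsum_iSup_of_monotone {α ι : Type*} [Preorder ι] [IsDirectedOrder ι]
    {f : α → ι → ℝ≥0∞} (hf : ∀ a, Monotone (f a)) :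
    ∑' a, ⨆ i, f a i = ⨆ i, ∑' a, f a i := by
  simp_rw [ENNReal.tsum_eq_iSup_sum, ENNReal.finsetSum_iSup_of_monotone hf]
  exact iSup_comm

namespace PMF

variable {α : Type*} (p : PMF α) {f : α → ℝ≥0∞}

lemma tsum_mul_le_one (hf : ∀ a, f a ≤ 1) : ∑' a, p a * f a ≤ 1 :=
  calc ∑' a, p a * f a ≤ ∑' a, p a := ENNReal.tsum_le_tsum fun a => mul_le_of_le_one_right' (hf a)
    _ = 1 := p.tsum_coe

lemma tsum_mul_eq_zero_iff : ∑' a, p a * f a = 0 ↔ ∀ a ∈ p.support, f a = 0 := by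
  simp only [ENNReal.tsum_eq_zero, mul_eq_zero, mem_support_iff]
  exact forall_congr' fun a => or_iff_not_imp_left

lemma tsum_mul_eq_one_iff (hf : ∀ a, f a ≤ 1) :
    ∑' a, p a * f a = 1 ↔ ∀ a ∈ p.support, f a = 1 := by
  constructor
  · intro hsum a ha
    by_contra hfa
    have hlt : p a * f a < p a * 1 :=
      ENNReal.mul_lt_mul_right ((mem_support_iff p a).mp ha) (p.apply_ne_top a)
        ((hf a).lt_of_ne hfa)
    have : ∑' a, p a * f a < ∑' a, p a :=
      ENNReal.tsum_lt_tsum (hsum ▸ ENNReal.one_ne_top)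
        (fun a => mul_le_of_le_one_right' (hf a)) (by rwa [mul_one] at hlt)
    rw [hsum, p.tsum_coe] at this
    exact lt_irrefl 1 this
  · intro h1
    refine (tsum_congr fun a => ?_).trans p.tsum_coe
    by_cases ha : a ∈ p.support
    · rw [h1 a ha, mul_one]
    · rw [(apply_eq_zero_iff p a).mpr ha, zero_mul]

end PMF

namespace POMDP

variable {S Act Ω : Type} (M : POMDP S Act Ω) (σ : Policy Act Ω) (T : Set S)

lemma reachN_le_reachN_succ (n : ℕ) (h : List (Ω × Act)) (s : S) :
    M.reachN σ T n h s ≤ M.reachN σ T (n + 1) h s := by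
  induction n generalizing h s with
  | zero =>
    simp only [reachN]
    split <;> simp
  | succ n ih =>
    simp only [reachN]
    split
    · exact le_rfl
    · gcongr with α s'
      exact ih _ _

lemma monotone_reachN (h : List (Ω × Act)) (s : S) : Monotone fun n => M.reachN σ T n h s :=
  monotone_nat_of_le_succ fun n => M.reachN_le_reachN_succ σ T n h s

lemma reachN_le_one (n : ℕ) (h : List (Ω × Act)) (s : S) : M.reachN σ T n h s ≤ 1 := by
  induction n generalizing h s with
  | zero =>
    simp only [reachN]
    split <;> simp
  | succ n ih =>
    simp only [reachN]
    split
    · exact le_rfl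
    · exact PMF.tsum_mul_le_one _ fun α => PMF.tsum_mul_le_one _ fun s' => ih _ _

noncomputable def reachProb (s : S) : ℝ≥0∞ := ⨆ n, M.reachN σ T n [] s

lemma reachProb_le_one (s : S) : M.reachProb σ T s ≤ 1 :=
  iSup_le fun n => M.reachN_le_one σ T n [] s

lemma prReach_eq_tsum (b : PMF S) : M.prReach σ T b = ∑' s, b s * M.reachProb σ T s := by
  simp_rw [prReach, reachProb, ENNReal.mul_iSup]
  exact (ENNReal.tsum_iSup_of_monotone fun s _ _ hmn =>
    mul_le_mul_right (M.monotone_reachN σ T [] s hmn) (b s)).symm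

lemma winningPolicyFrom_iff {REACH AVOID : Set S} {b : PMF S} :
    M.WinningPolicyFrom REACH AVOID σ b ↔
      (∀ s ∈ b.support, M.reachProb σ AVOID s = 0) ∧
        ∀ s ∈ b.support, M.reachProb σ REACH s = 1 := by
  rw [WinningPolicyFrom, prReach_eq_tsum, prReach_eq_tsum, PMF.tsum_mul_eq_zero_iff,
    PMF.tsum_mul_eq_one_iff _ (M.reachProb_le_one σ REACH)]

lemma winningPolicyFrom_congr_support {REACH AVOID : Set S} {b b' : PMF S}
    (hsupp : b.support = b'.support) :
    M.WinningPolicyFrom REACH AVOID σ b ↔ M.WinningPolicyFrom REACH AVOID σ b' := by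
  rw [winningPolicyFrom_iff, winningPolicyFrom_iff, hsupp]

end POMDP

theorem winning_of_same_support_general {S Act Ω : Type}
    (M : POMDP S Act Ω) (REACH AVOID : Set S)
    (b b' : PMF S) (hsupp : b.support = b'.support)
    (hwin : M.WinningBelief REACH AVOID b) :
    M.WinningBelief REACH AVOID b' :=
  hwin.imp fun σ => (M.winningPolicyFrom_congr_support σ hsupp).mp

/-- If a belief `b` is winning for an almost-sure reach-avoid
specification in a POMDP, then any belief `b'` with the same support is winning. -/
theorem winning_of_same_support {S Act Ω : Type} [Fintype S] [Fintype Act]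
    (M : POMDP S Act Ω) (REACH AVOID : Set S)
    (hdisj : Disjoint REACH AVOID)
    (hR : M.Absorbing REACH) (hA : M.Absorbing AVOID)
    (b b' : PMF S) (hsupp : b.support = b'.support)
    (hwin : M.WinningBelief REACH AVOID b) :
    M.WinningBelief REACH AVOID b' :=
  winning_of_same_support_general M REACH AVOID b b' hsupp hwin
end

section
/- In a finite Markov chain, from any state a bottom strongly connected component is reached with probability 1. -/
open scoped ENNReal Classical

/-- Probability that a finite Markov chain with kernel `K` reaches the set `T`
within `n` steps from state `s`. -/
noncomputable def mcReachN {S : Type} (K : S → PMF S) (T : Set S) :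
    ℕ → S → ℝ≥0∞
  | 0, s => if s ∈ T then 1 else 0
  | n + 1, s => if s ∈ T then 1 else ∑' t : S, K s t * mcReachN K T n t

/-- Probability that the chain eventually reaches `T` from `s`. -/
noncomputable def mcReach {S : Type} (K : S → PMF S) (T : Set S) (s : S) : ℝ≥0∞ :=
  ⨆ n, mcReachN K T n s

/-- `C` is a bottom strongly connected component of the Markov chain `K`:
nonempty, closed under transitions of positive probability, and strongly
connected. -/
def IsBSCC {S : Type} (K : S → PMF S) (C : Set S) : Prop :=
  C.Nonempty ∧ (∀ s ∈ C, ∀ t, K s t ≠ 0 → t ∈ C) ∧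
    ∀ s ∈ C, ∀ t ∈ C, Relation.ReflTransGen (fun a b => K a b ≠ 0) s t

/-
The function `p := mcReach K T`, with `T` the union of the BSCCs, equals `1` on `T` and is
harmonic off `T`: `p s = ∑ₜ K s t * p t`. A harmonic function attains its minimum only where
every successor attains it too, so the states where `p` is minimal form a nonempty closed set.
In a finite chain such a set contains a BSCC, on which `p = 1`; hence the minimum of `p` is `1`.
-/

section Closed

variable {S : Type} (K : S → PMF S)

def IsTransitionClosed (A : Set S) : Prop :=
  ∀ s ∈ A, ∀ t, K s t ≠ 0 → t ∈ A

variable {K}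

lemma IsTransitionClosed.mem_of_reflTransGen {A : Set S} (hA : IsTransitionClosed K A)
    {s t : S} (hs : s ∈ A) (hst : Relation.ReflTransGen (fun a b => K a b ≠ 0) s t) : t ∈ A := by
  induction hst with
  | refl => exact hs
  | tail _ hbc ih => exact hA _ ih _ hbc

lemma isTransitionClosed_reflTransGen (s : S) :
    IsTransitionClosed K {t | Relation.ReflTransGen (fun a b => K a b ≠ 0) s t} :=
  fun _ hu _ hut => hu.tail hut

/-- A minimal nonempty closed subset of `A` is strongly connected, since the set of states
reachable from any of its points is again nonempty and closed. -/
lemma IsTransitionClosed.exists_isBSCC_subset [Finite S] {A : Set S}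
    (hA : IsTransitionClosed K A) (hne : A.Nonempty) : ∃ C, IsBSCC K C ∧ C ⊆ A := by
  obtain ⟨C, ⟨hCne, hC, hCA⟩, hmin⟩ := exists_minimal_of_wellFoundedLT
    (fun B : Set S => B.Nonempty ∧ IsTransitionClosed K B ∧ B ⊆ A) ⟨A, hne, hA, le_rfl⟩
  refine ⟨C, ⟨hCne, hC, fun x hx y hy => ?_⟩, hCA⟩
  have hreach : {t | Relation.ReflTransGen (fun a b => K a b ≠ 0) x t} ⊆ C :=
    fun t ht => hC.mem_of_reflTransGen hx ht
  exact hmin ⟨⟨x, .refl⟩, isTransitionClosed_reflTransGen x, hreach.trans hCA⟩ hreach hy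

end Closed

section Reach

variable {S : Type} (K : S → PMF S) (T : Set S)

lemma mcReachN_succ_of_notMem {s : S} (hs : s ∉ T) (n : ℕ) :
    mcReachN K T (n + 1) s = ∑' t, K s t * mcReachN K T n t := by
  rw [mcReachN, if_neg hs]

lemma mcReachN_le_one (n : ℕ) (s : S) : mcReachN K T n s ≤ 1 := by
  induction n generalizing s with
  | zero => rw [mcReachN]; split <;> simp
  | succ n ih =>
    by_cases hs : s ∈ T
    · simp [mcReachN, hs]
    · calc mcReachN K T (n + 1) s ≤ ∑' t, K s t * 1 := by
            rw [mcReachN_succ_of_notMem K T hs]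
            exact ENNReal.tsum_le_tsum fun t => mul_le_mul_right (ih t) _
        _ = 1 := by simp

lemma monotone_mcReachN (s : S) : Monotone fun n => mcReachN K T n s := by
  suffices h : ∀ n s, mcReachN K T n s ≤ mcReachN K T (n + 1) s from
    monotone_nat_of_le_succ fun n => h n s
  intro n
  induction n with
  | zero => intro s; rw [mcReachN, mcReachN]; split <;> simp
  | succ n ih =>
    intro s
    by_cases hs : s ∈ T
    · simp [mcReachN, hs]
    · rw [mcReachN_succ_of_notMem K T hs, mcReachN_succ_of_notMem K T hs]
      exact ENNReal.tsum_le_tsum fun t => mul_le_mul_right (ih t) _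

lemma mcReach_le_one (s : S) : mcReach K T s ≤ 1 :=
  iSup_le fun n => mcReachN_le_one K T n s

lemma mcReach_eq_one_of_mem {s : S} (hs : s ∈ T) : mcReach K T s = 1 :=
  (mcReach_le_one K T s).antisymm <| le_iSup_of_le 0 (by simp [mcReachN, hs])

lemma mcReach_eq_tsum_of_notMem [Finite S] {s : S} (hs : s ∉ T) :
    mcReach K T s = ∑' t, K s t * mcReach K T t := by
  have := Fintype.ofFinite S
  calc mcReach K T s = ⨆ n, mcReachN K T (n + 1) s :=
        ((monotone_mcReachN K T s).iSup_nat_add 1).symm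
    _ = ⨆ n, ∑ t, K s t * mcReachN K T n t := by
      simp only [mcReachN_succ_of_notMem K T hs, tsum_fintype]
    _ = ∑ t, ⨆ n, K s t * mcReachN K T n t :=
      (ENNReal.finsetSum_iSup_of_monotone (f := fun t n => K s t * mcReachN K T n t)
        fun t _ _ hmn => mul_le_mul_right (monotone_mcReachN K T t hmn) _).symm
    _ = ∑' t, K s t * mcReach K T t := by simp only [mcReach, ENNReal.mul_iSup, tsum_fintype]

end Reach

lemma PMF.apply_eq_of_tsum_mul_le {α : Type*} (μ : PMF α) {f : α → ℝ≥0∞} {m : ℝ≥0∞}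
    (hm : m ≠ ∞) (hle : ∀ a, m ≤ f a) (hsum : ∑' a, μ a * f a ≤ m) {a : α} (ha : μ a ≠ 0) :
    f a = m := by
  refine (hle a).antisymm' ?_
  by_contra! hlt
  have hmean : ∑' b, μ b * m = m := by rw [ENNReal.tsum_mul_right, μ.tsum_coe, one_mul]
  have : ∑' b, μ b * m < ∑' b, μ b * f b :=
    ENNReal.tsum_lt_tsum (by rw [hmean]; exact hm) (fun b => mul_le_mul_right (hle b) _)
      ((ENNReal.mul_lt_mul_iff_right ha (μ.apply_ne_top a)).mpr hlt)
  exact (hmean ▸ this).not_ge hsum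

lemma isTransitionClosed_mcReach_argmin {S : Type} [Finite S] (K : S → PMF S) (T : Set S)
    {s₀ : S} (hmin : ∀ t, mcReach K T s₀ ≤ mcReach K T t) :
    IsTransitionClosed K {t | mcReach K T t = mcReach K T s₀} := by
  intro x hx t hxt
  by_cases hxT : x ∈ T
  · have h1 : mcReach K T s₀ = 1 := hx ▸ mcReach_eq_one_of_mem K T hxT
    exact (h1 ▸ mcReach_le_one K T t).antisymm (hmin t)
  · have hfin : mcReach K T s₀ ≠ ∞ := ((mcReach_le_one K T s₀).trans_lt ENNReal.one_lt_top).ne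
    refine (K x).apply_eq_of_tsum_mul_le hfin hmin ?_ hxt
    rw [← hx, mcReach_eq_tsum_of_notMem K T hxT]

/-- In a finite Markov chain, from any state some bottom strongly
connected component is reached with probability 1. -/
theorem mc_reaches_bscc {S : Type} [Fintype S] (K : S → PMF S) (s : S) :
    mcReach K {t | ∃ C, IsBSCC K C ∧ t ∈ C} s = 1 := by
  set T : Set S := {t | ∃ C, IsBSCC K C ∧ t ∈ C}
  obtain ⟨s₀, -, hmin⟩ := Finset.univ.exists_min_image (mcReach K T) ⟨s, Finset.mem_univ s⟩
  obtain ⟨C, hC, hCmin⟩ := (isTransitionClosed_mcReach_argmin K T fun t =>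
    hmin t (Finset.mem_univ t)).exists_isBSCC_subset ⟨s₀, rfl⟩
  obtain ⟨c, hc⟩ := hC.1
  have hmin_eq_one : mcReach K T s₀ = 1 :=
    (hCmin hc).symm.trans (mcReach_eq_one_of_mem K T ⟨C, hC, hc⟩)
  exact (mcReach_le_one K T s).antisymm (hmin_eq_one ▸ hmin s (Finset.mem_univ s))
end

section
/- In a POMDP, reach-avoid specifications with REACH and AVOID absorbing: if there is a memoryless deterministic observation-based policy σ such that the set C of states reachable under σ from the initial belief support b₀ satisfies (i) C ∩ AVOID = ∅, (ii) C is closed under σ-successors, and (iii) every state in C admits a real-valued ranking r with r(s) > r(s') for some σ-successor s' whenever s ∉ REACH, then σ is winning from b₀. -/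
open scoped ENNReal Classical

/-!
Under a memoryless policy the POMDP is a finite Markov chain. Let `f s` be the probability of
eventually reaching REACH from `s`; it is `1` on REACH and satisfies `f s ≥ ∑ P(s, t) f t`
elsewhere. If `f` were below `1` somewhere on the closed set `C`, take, among the states of `C`
where `f` attains its minimum, one of least rank. It is not in REACH, so it has a successor of
smaller rank, whose value is then strictly larger than the minimum; averaging over the successors
gives `f s > f s`. Hence REACH is reached almost surely from `C`, while AVOID, lying outside the
closed set `C`, is never reached.
-/

theorem ENNReal.tsum_mul_iSup_of_monotone {S : Type*} [Fintype S] (w : S → ℝ≥0∞)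
    {F : ℕ → S → ℝ≥0∞} (hF : ∀ s, Monotone fun n => F n s) :
    ∑' s, w s * ⨆ n, F n s = ⨆ n, ∑' s, w s * F n s := by
  simp only [tsum_fintype, ENNReal.mul_iSup]
  exact ENNReal.finsetSum_iSup_of_monotone fun s _ _ hmn => mul_le_mul_right (hF s hmn) _

namespace MarkovChain

variable {S : Type*}

def Closed (κ : S → PMF S) (C : Set S) : Prop :=
  ∀ s ∈ C, ∀ t, κ s t ≠ 0 → t ∈ C

noncomputable def reachWithin (κ : S → PMF S) (T : Set S) : ℕ → S → ℝ≥0∞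
  | 0, s => if s ∈ T then 1 else 0
  | n + 1, s => if s ∈ T then 1 else ∑' t, κ s t * reachWithin κ T n t

noncomputable def reachProb (κ : S → PMF S) (T : Set S) (s : S) : ℝ≥0∞ :=
  ⨆ n, reachWithin κ T n s

variable {κ : S → PMF S} {T C : Set S}

theorem reachWithin_of_mem {s : S} (hs : s ∈ T) (n : ℕ) : reachWithin κ T n s = 1 := by
  cases n <;> simp [reachWithin, hs]

theorem reachWithin_succ_of_notMem {s : S} (hs : s ∉ T) (n : ℕ) :
    reachWithin κ T (n + 1) s = ∑' t, κ s t * reachWithin κ T n t := by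
  simp [reachWithin, hs]

theorem reachWithin_le_one (n : ℕ) (s : S) : reachWithin κ T n s ≤ 1 := by
  induction n generalizing s with
  | zero => unfold reachWithin; split_ifs <;> simp
  | succ n ih =>
    by_cases hs : s ∈ T
    · rw [reachWithin_of_mem hs]
    · rw [reachWithin_succ_of_notMem hs]
      calc ∑' t, κ s t * reachWithin κ T n t ≤ ∑' t, κ s t * 1 := by gcongr; exact ih _
        _ = 1 := by rw [ENNReal.tsum_mul_right, (κ s).tsum_coe, one_mul]

theorem reachWithin_mono (s : S) : Monotone fun n => reachWithin κ T n s := by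
  refine monotone_nat_of_le_succ fun n => ?_
  induction n generalizing s with
  | zero => unfold reachWithin; split_ifs <;> simp
  | succ n ih =>
    by_cases hs : s ∈ T
    · simp only [reachWithin_of_mem hs, le_refl]
    · simp only [reachWithin_succ_of_notMem hs]
      gcongr with t
      exact ih t

theorem reachWithin_eq_zero_of_closed (hC : Closed κ C) (hCT : Disjoint C T) (n : ℕ) :
    ∀ s ∈ C, reachWithin κ T n s = 0 := by
  induction n with
  | zero => intro s hs; simp [reachWithin, hCT.notMem_of_mem_left hs]
  | succ n ih =>
    intro s hs
    rw [reachWithin_succ_of_notMem (hCT.notMem_of_mem_left hs), ENNReal.tsum_eq_zero]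
    intro t
    by_cases hst : κ s t = 0
    · rw [hst, zero_mul]
    · rw [ih t (hC s hs t hst), mul_zero]

theorem reachProb_of_mem {s : S} (hs : s ∈ T) : reachProb κ T s = 1 := by
  simp [reachProb, reachWithin_of_mem hs]

theorem reachProb_le_one (s : S) : reachProb κ T s ≤ 1 :=
  iSup_le fun n => reachWithin_le_one n s

theorem tsum_mul_reachProb_le [Fintype S] {s : S} (hs : s ∉ T) :
    ∑' t, κ s t * reachProb κ T t ≤ reachProb κ T s := by
  unfold reachProb
  rw [ENNReal.tsum_mul_iSup_of_monotone _ reachWithin_mono]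
  exact iSup_le fun n => reachWithin_succ_of_notMem hs n ▸ le_iSup (reachWithin κ T · s) (n + 1)

theorem reachProb_eq_zero_of_closed (hC : Closed κ C) (hCT : Disjoint C T) {s : S}
    (hs : s ∈ C) : reachProb κ T s = 0 :=
  ENNReal.iSup_eq_zero.mpr fun n => reachWithin_eq_zero_of_closed hC hCT n s hs

theorem one_le_of_ranking [Finite S] (hC : Closed κ C) (r : S → ℝ)
    (hr : ∀ s ∈ C, s ∉ T → ∃ t, κ s t ≠ 0 ∧ r s > r t) {f : S → ℝ≥0∞}
    (hT : ∀ s ∈ T, 1 ≤ f s) (hsuper : ∀ s ∈ C, s ∉ T → ∑' t, κ s t * f t ≤ f s) :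
    ∀ s ∈ C, 1 ≤ f s := by
  by_contra! hlow
  obtain ⟨s₀, hs₀C, hs₀⟩ := hlow
  obtain ⟨m, hmC, hmin⟩ := Set.exists_min_image C f C.toFinite ⟨s₀, hs₀C⟩
  set D := {s ∈ C | f s = f m}
  obtain ⟨s, ⟨hsC, hsm⟩, hrmin⟩ := Set.exists_min_image D r D.toFinite ⟨m, hmC, rfl⟩
  have hs1 : f s < 1 := hsm ▸ (hmin s₀ hs₀C).trans_lt hs₀
  have hsT : s ∉ T := fun h => (hT s h).not_gt hs1
  obtain ⟨t, hst, hrt⟩ := hr s hsC hsT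
  have htC : t ∈ C := hC s hsC t hst
  have hft : f s < f t :=
    hsm ▸ (hmin t htC).lt_of_ne fun h => (hrmin t ⟨htC, h.symm⟩).not_gt hrt
  have hmean : ∑' u, κ s u * f s = f s := by
    rw [ENNReal.tsum_mul_right, (κ s).tsum_coe, one_mul]
  have hle : ∀ u, κ s u * f s ≤ κ s u * f u := fun u => by
    by_cases hsu : κ s u = 0
    · simp [hsu]
    · exact mul_le_mul_right (hsm ▸ hmin u (hC s hsC u hsu)) _
  have hgt : f s < ∑' u, κ s u * f u := by
    calc f s = ∑' u, κ s u * f s := hmean.symm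
      _ < ∑' u, κ s u * f u := ENNReal.tsum_lt_tsum (hmean.symm ▸ hs1.ne_top) hle
          (ENNReal.mul_lt_mul_right hst ((κ s).apply_ne_top t) hft)
  exact (hsuper s hsC hsT).not_gt hgt

theorem reachProb_eq_one_of_ranking [Fintype S] (hC : Closed κ C) (r : S → ℝ)
    (hr : ∀ s ∈ C, s ∉ T → ∃ t, κ s t ≠ 0 ∧ r s > r t) {s : S} (hs : s ∈ C) :
    reachProb κ T s = 1 :=
  (reachProb_le_one s).antisymm <|
    one_le_of_ranking hC r hr (fun _ ht => (reachProb_of_mem ht).ge)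
      (fun _ _ ht => tsum_mul_reachProb_le ht) s hs

end MarkovChain

theorem PMF.tsum_mul_eq_of_eqOn_support {S : Type*} (β : PMF S) {g : S → ℝ≥0∞} {c : ℝ≥0∞}
    (hg : Set.EqOn g (fun _ => c) β.support) : ∑' s, β s * g s = c := by
  calc ∑' s, β s * g s = ∑' s, β s * c := by
        refine tsum_congr fun s => ?_
        by_cases hs : β s = 0
        · simp [hs]
        · rw [hg ((β.mem_support_iff s).mpr hs)]
    _ = c := by rw [ENNReal.tsum_mul_right, β.tsum_coe, one_mul]

namespace POMDP

variable {S Act Ω : Type}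

noncomputable def inducedChain (M : POMDP S Act Ω) (σ : Ω → PMF Act) (s : S) : PMF S :=
  (σ (M.obs s)).bind (M.P s)

theorem reachN_memoryless (M : POMDP S Act Ω) (σ : Ω → PMF Act) (T : Set S) (n : ℕ)
    (h : List (Ω × Act)) (s : S) :
    M.reachN (fun _ => σ) T n h s = MarkovChain.reachWithin (M.inducedChain σ) T n s := by
  induction n generalizing h s with
  | zero => rfl
  | succ n ih =>
    by_cases hs : s ∈ T
    · simp [reachN, MarkovChain.reachWithin_of_mem hs, hs]
    · rw [MarkovChain.reachWithin_succ_of_notMem hs]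
      simp only [reachN, if_neg hs, ih, inducedChain, PMF.bind_apply, ← ENNReal.tsum_mul_right,
        mul_assoc, ← ENNReal.tsum_mul_left]
      exact ENNReal.tsum_comm

theorem prReach_memoryless [Fintype S] (M : POMDP S Act Ω) (σ : Ω → PMF Act) (T : Set S)
    (β : PMF S) :
    M.prReach (fun _ => σ) T β =
      ∑' s, β s * MarkovChain.reachProb (M.inducedChain σ) T s := by
  simp only [prReach, reachN_memoryless, MarkovChain.reachProb]
  exact (ENNReal.tsum_mul_iSup_of_monotone _ fun _ => MarkovChain.reachWithin_mono _).symm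

end POMDP

theorem memoryless_ranking_winning_general {S Act Ω : Type} [Fintype S]
    (M : POMDP S Act Ω) (REACH AVOID : Set S)
    (σ : Ω → Act) (b₀ C : Set S)
    (hinit : b₀ ⊆ C)
    -- (i) no AVOID state is reached
    (havoid : C ∩ AVOID = ∅)
    -- (ii) C is closed under σ-successors
    (hclosed : ∀ s ∈ C, ∀ s', M.P s (σ (M.obs s)) s' ≠ 0 → s' ∈ C)
    -- (iii) ranking function
    (r : S → ℝ)
    (hrank : ∀ s ∈ C, s ∉ REACH →
      ∃ s', M.P s (σ (M.obs s)) s' ≠ 0 ∧ r s > r s') :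
    M.WinningFromSupport REACH AVOID (fun _ z => PMF.pure (σ z)) b₀ := by
  intro β hβ
  have hsupp : β.support ⊆ C := hβ ▸ hinit
  have hchain : M.inducedChain (fun z => PMF.pure (σ z)) = fun s => M.P s (σ (M.obs s)) := by
    funext s; exact PMF.pure_bind _ _
  refine ⟨?_, ?_⟩ <;> rw [POMDP.prReach_memoryless, hchain] <;>
    refine β.tsum_mul_eq_of_eqOn_support fun s hs => ?_
  · exact MarkovChain.reachProb_eq_zero_of_closed hclosed
      (Set.disjoint_iff_inter_eq_empty.mpr havoid) (hsupp hs)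
  · exact MarkovChain.reachProb_eq_one_of_ranking hclosed r hrank (hsupp hs)

/-- A memoryless deterministic observation-based policy `σ` whose
reached set `C` from initial belief support `b₀` (i) avoids AVOID, (ii) is
closed under σ-successors, and (iii) admits a real-valued ranking function
decreasing outside REACH, is winning from `b₀`. -/
theorem memoryless_ranking_winning {S Act Ω : Type} [Fintype S] [Fintype Act]
    (M : POMDP S Act Ω) (REACH AVOID : Set S)
    (hdisj : Disjoint REACH AVOID)
    (hR : M.Absorbing REACH) (hA : M.Absorbing AVOID)
    (σ : Ω → Act) (b₀ C : Set S) (hb₀ : M.IsBeliefSupport b₀)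
    (hinit : b₀ ⊆ C)
    -- (i) no AVOID state is reached
    (havoid : C ∩ AVOID = ∅)
    -- (ii) C is closed under σ-successors
    (hclosed : ∀ s ∈ C, ∀ s', M.P s (σ (M.obs s)) s' ≠ 0 → s' ∈ C)
    -- (iii) ranking function
    (r : S → ℝ)
    (hrank : ∀ s ∈ C, s ∉ REACH →
      ∃ s', M.P s (σ (M.obs s)) s' ≠ 0 ∧ r s > r s') :
    M.WinningFromSupport REACH AVOID (fun _ z => PMF.pure (σ z)) b₀ :=
  memoryless_ranking_winning_general M REACH AVOID σ b₀ C hinit havoid hclosed r hrank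
end

section
/- For a safety specification (only requiring AVOID to be reached with probability 0), if W is a deadlock-free set of belief supports disjoint from the lifted AVOID set, then any ν-admissible policy (for the shield ν(b) = {α | Post(b,α) ⊆ W}) reaches AVOID with probability 0 from every b ∈ W, without any fairness assumption. -/
open scoped ENNReal Classical

namespace POMDP

variable {S Act Ω : Type}

/-- The successor belief support of `b` under action `α`, conditioned on
observation `z`. -/
noncomputable def succSupport (M : POMDP S Act Ω) [Fintype S]
    (b : Finset S) (α : Act) (z : Ω) : Finset S :=
  Finset.univ.filter (fun s' => M.obs s' = z ∧ ∃ s ∈ b, M.P s α s' ≠ 0)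

/-- The set of possible successor belief supports of `b` under action `α`. -/
noncomputable def Post (M : POMDP S Act Ω) [Fintype S]
    (b : Finset S) (α : Act) : Set (Finset S) :=
  {b' | ∃ z : Ω, b' = M.succSupport b α z ∧ b'.Nonempty}

/-- The belief-support MDP of a POMDP, represented as a fully observable POMDP
(observation function is the identity). Transition probabilities are an arbitrary
positive distribution over the successor supports, realized by sampling a
uniform state of the support and a transition of the POMDP. -/
noncomputable def belSup (M : POMDP S Act Ω) [Fintype S] :
    POMDP (Finset S) Act (Finset S) where
  P := fun b α =>
    if h : b.Nonempty then
      PMF.map (fun s' => M.succSupport b α (M.obs s'))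
        ((PMF.uniformOfFinset b h).bind fun s => M.P s α)
    else PMF.pure b
  obs := id

/-- Lifted AVOID set: belief supports intersecting AVOID. -/
def liftedAvoid (AVOID : Set S) : Set (Finset S) := {b | ∃ s ∈ b, s ∈ AVOID}

/-- Lifted REACH set: belief supports contained in REACH. -/
def liftedReach (REACH : Set S) : Set (Finset S) := {b | ∀ s ∈ b, s ∈ REACH}

end POMDP

namespace POMDP

variable {S Act Ω : Type}

/-- A set of belief supports is deadlock-free: every element has an action
whose successors all stay in the set. -/
def DeadlockFree (M : POMDP S Act Ω) [Fintype S] (W : Set (Finset S)) : Prop :=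
  ∀ b ∈ W, ∃ α : Act, M.Post b α ⊆ W

/-- A set of belief supports is productive towards (the lifting of) `REACH`:
from every element there is a finite path, staying in `W` and with all successors
of each step inside `W`, ending in a belief support contained in `REACH`. -/
def Productive (M : POMDP S Act Ω) [Fintype S] (REACH : Set S)
    (W : Set (Finset S)) : Prop :=
  ∀ b ∈ W, ∃ (n : ℕ) (bs : ℕ → Finset S) (as : ℕ → Act),
    bs 0 = b ∧ (∀ i ≤ n, bs i ∈ W) ∧
    (∀ i < n, bs (i + 1) ∈ M.Post (bs i) (as i) ∧ M.Post (bs i) (as i) ⊆ W) ∧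
    (∀ s ∈ bs n, s ∈ REACH)

end POMDP

namespace POMDP

variable {S Act Ω : Type}

section Invariant

variable (M : POMDP S Act Ω) (σ : Policy Act Ω)

def IsClosedUnder (W : Set S) : Prop :=
  ∀ (h : List (Ω × Act)), ∀ s ∈ W, ∀ α ∈ (σ h (M.obs s)).support, (M.P s α).support ⊆ W

variable {M σ} {T W : Set S}

theorem reachN_eq_zero_of_isClosedUnder (hW : M.IsClosedUnder σ W) (hWT : ∀ s ∈ W, s ∉ T) :
    ∀ (n : ℕ) (h : List (Ω × Act)), ∀ s ∈ W, M.reachN σ T n h s = 0 := by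
  intro n
  induction n with
  | zero => intro h s hs; simp [reachN, hWT s hs]
  | succ n ih =>
    intro h s hs
    rw [reachN, if_neg (hWT s hs), ENNReal.tsum_eq_zero]
    intro α
    by_cases hα : α ∈ (σ h (M.obs s)).support
    · refine mul_eq_zero_of_right _ (ENNReal.tsum_eq_zero.2 fun s' => ?_)
      by_cases hs' : s' ∈ (M.P s α).support
      · rw [ih _ s' (hW h s hs α hα hs'), mul_zero]
      · rw [PMF.apply_eq_zero_iff _ _ |>.2 hs', zero_mul]
    · rw [PMF.apply_eq_zero_iff _ _ |>.2 hα, zero_mul]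

theorem prReach_eq_zero_of_isClosedUnder (hW : M.IsClosedUnder σ W) (hWT : ∀ s ∈ W, s ∉ T)
    {β : PMF S} (hβ : β.support ⊆ W) : M.prReach σ T β = 0 := by
  refine ENNReal.iSup_eq_zero.2 fun n => ENNReal.tsum_eq_zero.2 fun s => ?_
  by_cases hs : s ∈ β.support
  · rw [reachN_eq_zero_of_isClosedUnder hW hWT n [] s (hβ hs), mul_zero]
  · rw [PMF.apply_eq_zero_iff _ _ |>.2 hs, zero_mul]

end Invariant

/-- `belSup` makes the empty support absorbing, and `Post` never contains it. -/
theorem support_belSup_P_subset [Fintype S] (M : POMDP S Act Ω) (b : Finset S) (α : Act) :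
    (M.belSup.P b α).support ⊆ M.Post b α ∪ {b} := by
  by_cases hb : b.Nonempty
  · intro b' hb'
    simp only [belSup, dif_pos hb, PMF.support_map, PMF.support_bind,
      PMF.support_uniformOfFinset, Finset.mem_coe, Set.mem_image, Set.mem_iUnion] at hb'
    obtain ⟨s', ⟨s, hs, hss'⟩, rfl⟩ := hb'
    refine Or.inl ⟨M.obs s', rfl, s', ?_⟩
    simpa [succSupport] using ⟨s, hs, hss'⟩
  · simp [belSup, hb]

end POMDP

theorem safety_shield_sound_general {S Act Ω : Type} [Fintype S]
    (M : POMDP S Act Ω) (AVOID : Set S)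
    (W : Set (Finset S))
    (havoid : ∀ b ∈ W, b ∉ POMDP.liftedAvoid AVOID)
    (ν : Finset S → Set Act)
    (hν : ∀ b, ν b = {α | M.Post b α ⊆ W})
    (σ : POMDP.Policy Act (Finset S))
    (hadm : ∀ (h : List (Finset S × Act)) (b : Finset S), b ∈ W →
      (σ h b).support ⊆ ν b) :
    ∀ b ∈ W,
      (M.belSup).prReach σ (POMDP.liftedAvoid AVOID) (PMF.pure b) = 0 := by
  have hclosed : M.belSup.IsClosedUnder σ W := by
    intro h b hb α hα b' hb'
    have hPost : M.Post b α ⊆ W := by simpa [hν] using hadm h b hb hα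
    rcases POMDP.support_belSup_P_subset M b α hb' with hb' | rfl
    exacts [hPost hb', hb]
  intro b hb
  exact POMDP.prReach_eq_zero_of_isClosedUnder hclosed havoid (by simpa using hb)

/-- Safety shielding. If `W` is deadlock-free and disjoint from
the lifted AVOID set, then any policy admissible for the shield
`ν(b) = {α | Post(b,α) ⊆ W}` reaches AVOID with probability 0 from every
`b ∈ W`, without any fairness assumption. -/
theorem safety_shield_sound {S Act Ω : Type} [Fintype S] [Fintype Act]
    (M : POMDP S Act Ω) (AVOID : Set S)
    (W : Set (Finset S))
    (hdf : M.DeadlockFree W)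
    (havoid : ∀ b ∈ W, b ∉ POMDP.liftedAvoid AVOID)
    (ν : Finset S → Set Act)
    (hν : ∀ b, ν b = {α | M.Post b α ⊆ W})
    (hνne : ∀ b ∈ W, (ν b).Nonempty)
    (σ : POMDP.Policy Act (Finset S))
    (hadm : ∀ (h : List (Finset S × Act)) (b : Finset S), b ∈ W →
      (σ h b).support ⊆ ν b) :
    ∀ b ∈ W,
      (M.belSup).prReach σ (POMDP.liftedAvoid AVOID) (PMF.pure b) = 0 :=
  safety_shield_sound_general M AVOID W havoid ν hν σ hadm
end
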